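/- arXiv:2503.09907 — 3 statements merged into one kernel-verified Lean document; each statement's English description precedes it below -/
import Mathlib

section
/- Let Z be a standard normal random variable. For any s > 0, any h, t ∈ ℝ, and any δ > 0, we have inf over |b| ≤ t + δs of P(|b + sZ| ≤ h) ≥ (inf over |b| ≤ t of P(|b + sZ| ≤ h)) − δ. -/
/-!
The standard normal density is bounded by `1/√(2π) ≤ 1/2`, and `{z | |b + s z| ≤ h}` is an
interval whose endpoints move by `|b - b'|/s` when `b` moves to `b'`; so its probability changes by
at most `|b - b'|/s`. Every `b` with `|b| ≤ t + δs` is within `δs` of its clamp to `[-t, t]`.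
-/

open MeasureTheory ProbabilityTheory Real Set NNReal

lemma gaussianPDFReal_le_inv_sqrt (μ : ℝ) (v : ℝ≥0) (x : ℝ) :
    gaussianPDFReal μ v x ≤ (√(2 * π * v))⁻¹ := by
  refine mul_le_of_le_one_right (by positivity) (exp_le_one_iff.2 ?_)
  exact div_nonpos_of_nonpos_of_nonneg (neg_nonpos.2 (sq_nonneg _)) (by positivity)

lemma gaussianReal_le_smul_volume (μ : ℝ) {v : ℝ≥0} (hv : v ≠ 0) :
    gaussianReal μ v ≤ ENNReal.ofReal (√(2 * π * v))⁻¹ • volume := by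
  rw [gaussianReal_of_var_ne_zero μ hv, ← withDensity_const]
  exact withDensity_mono <| ae_of_all _ fun x =>
    ENNReal.ofReal_le_ofReal (gaussianPDFReal_le_inv_sqrt μ v x)

section DominatedByLebesgue

variable {μ : Measure ℝ} {C : ℝ}

lemma measureReal_Icc_le_of_le_smul_volume (hμ : μ ≤ ENNReal.ofReal C • volume) (hC : 0 ≤ C)
    (a b : ℝ) : μ.real (Icc a b) ≤ C * |b - a| := by
  have : μ (Icc a b) ≤ ENNReal.ofReal (C * |b - a|) :=
    calc μ (Icc a b) ≤ ENNReal.ofReal C * ENNReal.ofReal (b - a) := by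
          simpa [Real.volume_Icc] using hμ (Icc a b)
      _ ≤ ENNReal.ofReal (C * |b - a|) := by
          rw [← ENNReal.ofReal_mul hC]; gcongr; exact le_abs_self _
  simpa [measureReal_def, abs_nonneg, hC] using ENNReal.toReal_le_of_le_ofReal (by positivity) this

lemma measureReal_Icc_le_add [IsFiniteMeasure μ] (hμ : μ ≤ ENNReal.ofReal C • volume)
    (hC : 0 ≤ C) (a b a' b' : ℝ) :
    μ.real (Icc a b) ≤ μ.real (Icc a' b') + C * (|a' - a| + |b - b'|) := by
  have hsub : Icc a b ⊆ Icc a a' ∪ Icc a' b' ∪ Icc b' b := by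
    intro z ⟨haz, hzb⟩
    by_cases hza : z < a'
    · exact Or.inl (Or.inl ⟨haz, hza.le⟩)
    by_cases hzb' : b' < z
    · exact Or.inr ⟨hzb'.le, hzb⟩
    · exact Or.inl (Or.inr ⟨not_lt.1 hza, not_lt.1 hzb'⟩)
  calc μ.real (Icc a b) ≤ μ.real (Icc a a') + μ.real (Icc a' b') + μ.real (Icc b' b) :=
        (measureReal_mono hsub).trans
          ((measureReal_union_le _ _).trans (by gcongr; exact measureReal_union_le _ _))
    _ ≤ C * |a' - a| + μ.real (Icc a' b') + C * |b - b'| := by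
        gcongr <;> exact measureReal_Icc_le_of_le_smul_volume hμ hC _ _
    _ = μ.real (Icc a' b') + C * (|a' - a| + |b - b'|) := by ring

lemma setOf_abs_add_mul_le_eq_Icc {s : ℝ} (hs : 0 < s) (h b : ℝ) :
    {z : ℝ | |b + s * z| ≤ h} = Icc ((-h - b) / s) ((h - b) / s) := by
  ext z
  simp only [mem_ofPred_eq, mem_Icc, abs_le, div_le_iff₀ hs, le_div_iff₀ hs]
  constructor <;> rintro ⟨h₁, h₂⟩ <;> constructor <;> linarith

lemma measureReal_abs_add_mul_le_le_add [IsFiniteMeasure μ]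
    (hμ : μ ≤ ENNReal.ofReal C • volume) (hC : 0 ≤ C) {s : ℝ} (hs : 0 < s) (h b b' : ℝ) :
    μ.real {z | |b' + s * z| ≤ h} ≤ μ.real {z | |b + s * z| ≤ h} + 2 * C * |b' - b| / s := by
  rw [setOf_abs_add_mul_le_eq_Icc hs, setOf_abs_add_mul_le_eq_Icc hs]
  convert measureReal_Icc_le_add hμ hC _ _ ((-h - b) / s) ((h - b) / s) using 2
  have hlo : (-h - b) / s - (-h - b') / s = (b' - b) / s := by ring
  have hhi : (h - b') / s - (h - b) / s = -((b' - b) / s) := by ring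
  rw [hlo, hhi, abs_neg, abs_div, abs_of_pos hs]
  ring

end DominatedByLebesgue

lemma two_mul_inv_sqrt_two_pi_le_one : 2 * (√(2 * π))⁻¹ ≤ 1 := by
  rw [← div_eq_mul_inv, div_le_one (by positivity)]
  exact (Real.le_sqrt zero_le_two (by positivity)).2 (by nlinarith [pi_gt_three])

lemma exists_abs_le_abs_sub_le {t r b : ℝ} (ht : 0 ≤ t) (hr : 0 ≤ r) (hb : |b| ≤ t + r) :
    ∃ c, |c| ≤ t ∧ |b - c| ≤ r :=
  ⟨max (-t) (min b t), by
    simp only [abs_le] at hb ⊢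
    grind⟩

lemma sInf_sub_le_sInf_of_forall_exists_le {A B : Set ℝ} {δ : ℝ} (hA : BddBelow A)
    (hB : B.Nonempty) (h : ∀ q ∈ B, ∃ p ∈ A, p ≤ q + δ) : sInf A - δ ≤ sInf B :=
  le_csInf hB fun q hq => by
    obtain ⟨p, hp, hpq⟩ := h q hq
    linarith [csInf_le hA hp]

/-- Gaussian CDF stability: for `Z ~ N(0,1)`, `s > 0`, `δ > 0`,
`inf_{|b| ≤ t + δs} P(|b + sZ| ≤ h) ≥ inf_{|b| ≤ t} P(|b + sZ| ≤ h) − δ`. -/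
theorem gaussian_inf_stability (s h t δ : ℝ) (hs : 0 < s) (hδ : 0 < δ) :
    sInf {p : ℝ | ∃ b : ℝ, |b| ≤ t + δ * s ∧
        p = ((gaussianReal 0 1) {z : ℝ | |b + s * z| ≤ h}).toReal} ≥
      sInf {p : ℝ | ∃ b : ℝ, |b| ≤ t ∧
        p = ((gaussianReal 0 1) {z : ℝ | |b + s * z| ≤ h}).toReal} - δ := by
  set f : ℝ → ℝ := fun b => (gaussianReal 0 1).real {z | |b + s * z| ≤ h}
  change sInf {p | ∃ b, |b| ≤ t + δ * s ∧ p = f b} ≥ sInf {p | ∃ b, |b| ≤ t ∧ p = f b} - δ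
  have hf (b b' : ℝ) : f b' ≤ f b + |b' - b| / s := by
    have hC := two_mul_inv_sqrt_two_pi_le_one
    have := measureReal_abs_add_mul_le_le_add (gaussianReal_le_smul_volume 0 one_ne_zero)
      (by positivity) hs h b b'
    simp only [NNReal.coe_one, mul_one] at this
    refine this.trans ?_
    gcongr
    exact mul_le_of_le_one_left (abs_nonneg _) hC
  rcases {p | ∃ b, |b| ≤ t ∧ p = f b}.eq_empty_or_nonempty with hA | ⟨_, b₀, hb₀, -⟩
  · rw [hA, Real.sInf_empty]
    have : 0 ≤ sInf {p | ∃ b, |b| ≤ t + δ * s ∧ p = f b} :=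
      Real.sInf_nonneg (by rintro _ ⟨b, -, rfl⟩; exact measureReal_nonneg)
    linarith
  have ht : 0 ≤ t := (abs_nonneg b₀).trans hb₀
  refine sInf_sub_le_sInf_of_forall_exists_le ⟨0, ?_⟩ ⟨f b₀, b₀, by nlinarith, rfl⟩ ?_
  · rintro _ ⟨b, -, rfl⟩; exact measureReal_nonneg
  rintro _ ⟨b, hb, rfl⟩
  obtain ⟨c, hc, hbc⟩ := exists_abs_le_abs_sub_le ht (by positivity) hb
  refine ⟨f c, ⟨c, hc, rfl⟩, (hf b c).trans ?_⟩
  rw [abs_sub_comm]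
  gcongr
  exact div_le_of_le_mul₀ hs.le hδ.le hbc
end

section
/- Let X be a real random variable with a strictly positive density in a neighborhood of 0, E[X⁴] < ∞, and W = 1{X > 0}. Then the matrix A = E[v(X,W)v(X,W)ᵀ], with v(x,w) = (w, 1−w, xw, x(1−w), x²), is positive definite. -/
open MeasureTheory
open scoped ENNReal

/-- The design vector `v(x, w) = (w, 1−w, xw, x(1−w), x²)` with `w = 1{x > 0}`. -/
noncomputable def designVec (x : ℝ) : Fin 5 → ℝ :=
  ![if 0 < x then 1 else 0, if 0 < x then 0 else 1,
    if 0 < x then x else 0, if 0 < x then 0 else x, x ^ 2]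

lemma quad_coeffs_zero (a b c : ℝ) (s : Set ℝ) (hs : s.Infinite)
    (h : ∀ x ∈ s, a + b * x + c * x ^ 2 = 0) : a = 0 ∧ b = 0 ∧ c = 0 := by
  set p : Polynomial ℝ :=
    Polynomial.C a + Polynomial.C b * Polynomial.X + Polynomial.C c * Polynomial.X ^ 2 with hp
  have hp0 : p = 0 := by
    apply Polynomial.eq_zero_of_infinite_isRoot
    apply hs.mono
    intro x hx
    simp [Polynomial.IsRoot, hp, h x hx]
  refine ⟨?_, ?_, ?_⟩
  · have := congrArg (fun q => Polynomial.coeff q 0) hp0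
    simpa [hp] using this
  · have := congrArg (fun q => Polynomial.coeff q 1) hp0
    simpa [hp] using this
  · have := congrArg (fun q => Polynomial.coeff q 2) hp0
    simpa [hp] using this

lemma designVec_measurable (i : Fin 5) : Measurable fun x : ℝ => designVec x i := by
  have hset : MeasurableSet {x : ℝ | 0 < x} := measurableSet_Ioi
  fin_cases i <;> simp only [designVec, Matrix.cons_val_zero, Matrix.cons_val_one,
    Matrix.head_cons, Matrix.cons_val_two, Matrix.tail_cons, Matrix.cons_val_three,
    Matrix.cons_val_four] <;>
    first
      | exact Measurable.ite hset measurable_const measurable_const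
      | exact Measurable.ite hset measurable_id measurable_const
      | exact Measurable.ite hset measurable_const measurable_id
      | exact measurable_id.pow_const 2

lemma designVec_abs_le (i : Fin 5) (x : ℝ) : |designVec x i| ≤ 1 + x ^ 2 := by
  have h1 : |x| ≤ 1 + x ^ 2 := by nlinarith [sq_nonneg (|x| - 1), sq_abs x]
  fin_cases i <;> simp only [designVec, Matrix.cons_val_zero, Matrix.cons_val_one,
    Matrix.head_cons, Matrix.cons_val_two, Matrix.tail_cons, Matrix.cons_val_three,
    Matrix.cons_val_four] <;> split_ifs <;>
    simp_all [abs_le] <;> nlinarith [sq_nonneg x, sq_abs x]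

/-- If `X` has a strictly positive density in a neighborhood of `0` and `E[X⁴] < ∞`,
then `A = E[v(X,W) v(X,W)ᵀ]` is positive definite. -/
theorem design_matrix_pos_def
    {Ω : Type*} [MeasurableSpace Ω] (P : Measure Ω) [IsProbabilityMeasure P]
    (X : Ω → ℝ) (hX : Measurable X) (hX4 : MemLp X 4 P)
    (hpdf : HasPDF X P volume)
    (hpos : ∃ ε > 0, ∀ x ∈ Set.Ioo (-ε) ε, 0 < pdf X P volume x) :
    ∀ u : Fin 5 → ℝ, u ≠ 0 →
      0 < ∑ i, ∑ j, u i * (∫ ω, designVec (X ω) i * designVec (X ω) j ∂P) * u j := by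
  intro u hu
  set g : ℝ → ℝ := fun x => ∑ i, u i * designVec x i with hg
  have hmeasg : Measurable g := by
    apply Finset.measurable_sum
    intro i _
    exact (designVec_measurable i).const_mul _
  -- integrability of X ^ 4
  have hX4int : Integrable (fun ω => X ω ^ 4) P := by
    have h := hX4.integrable_norm_rpow (by norm_num) (by norm_num)
    apply h.congr
    filter_upwards with ω
    have h4 : ((4 : ℝ≥0∞).toReal) = ((4 : ℕ) : ℝ) := by norm_num
    have hnn : (0:ℝ) ≤ X ω ^ 4 := by positivity
    rw [h4, Real.rpow_natCast, Real.norm_eq_abs, ← abs_pow, abs_of_nonneg hnn]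
  -- dominating function
  have hD : Integrable (fun ω => 3 + 3 * X ω ^ 4) P :=
    (integrable_const (3:ℝ)).add (hX4int.const_mul 3)
  -- integrability of products
  have hint : ∀ i j : Fin 5,
      Integrable (fun ω => designVec (X ω) i * designVec (X ω) j) P := by
    intro i j
    apply Integrable.mono' hD
    · exact (((designVec_measurable i).comp hX).mul
        ((designVec_measurable j).comp hX)).aestronglyMeasurable
    · filter_upwards with ω
      have hi := designVec_abs_le i (X ω)
      have hj := designVec_abs_le j (X ω)
      have hin : (0:ℝ) ≤ 1 + X ω ^ 2 := by positivity
      rw [Real.norm_eq_abs, abs_mul]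
      calc |designVec (X ω) i| * |designVec (X ω) j| ≤ (1 + X ω ^ 2) * (1 + X ω ^ 2) :=
            mul_le_mul hi hj (abs_nonneg _) hin
        _ ≤ 3 + 3 * X ω ^ 4 := by nlinarith [sq_nonneg (X ω), sq_nonneg (X ω ^ 2)]
  -- rewrite the quadratic form as an integral
  have key : ∑ i, ∑ j, u i * (∫ ω, designVec (X ω) i * designVec (X ω) j ∂P) * u j
      = ∫ ω, g (X ω) ^ 2 ∂P := by
    have h1 : ∀ i j : Fin 5,
        u i * (∫ ω, designVec (X ω) i * designVec (X ω) j ∂P) * u j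
          = ∫ ω, u i * (designVec (X ω) i * designVec (X ω) j) * u j ∂P := by
      intro i j
      rw [integral_mul_const, integral_const_mul]
    calc ∑ i, ∑ j, u i * (∫ ω, designVec (X ω) i * designVec (X ω) j ∂P) * u j
        = ∑ i, ∑ j, ∫ ω, u i * (designVec (X ω) i * designVec (X ω) j) * u j ∂P := by
          exact Finset.sum_congr rfl fun i _ => Finset.sum_congr rfl fun j _ => h1 i j
      _ = ∑ i, ∫ ω, ∑ j, u i * (designVec (X ω) i * designVec (X ω) j) * u j ∂P := by
          refine Finset.sum_congr rfl fun i _ => ?_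
          exact (integral_finset_sum _ fun j _ => ((hint i j).const_mul _).mul_const _).symm
      _ = ∫ ω, ∑ i, ∑ j, u i * (designVec (X ω) i * designVec (X ω) j) * u j ∂P := by
          refine (integral_finset_sum _ fun i _ => ?_).symm
          exact integrable_finset_sum _ fun j _ => ((hint i j).const_mul _).mul_const _
      _ = ∫ ω, g (X ω) ^ 2 ∂P := by
          apply integral_congr_ae
          filter_upwards with ω
          rw [hg, sq, Finset.sum_mul_sum]
          exact Finset.sum_congr rfl fun i _ => Finset.sum_congr rfl fun j _ => by ring
  rw [key]
  have hintg2 : Integrable (fun ω => g (X ω) ^ 2) P := by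
    have : Integrable (fun ω => ∑ i, ∑ j,
        u i * (designVec (X ω) i * designVec (X ω) j) * u j) P :=
      integrable_finset_sum _ fun i _ =>
        integrable_finset_sum _ fun j _ => ((hint i j).const_mul _).mul_const _
    apply this.congr
    filter_upwards with ω
    rw [hg, sq, Finset.sum_mul_sum]
    exact Finset.sum_congr rfl fun i _ => Finset.sum_congr rfl fun j _ => by ring
  have h0 : 0 ≤ ∫ ω, g (X ω) ^ 2 ∂P := integral_nonneg fun ω => sq_nonneg _
  rcases h0.lt_or_eq with hlt | heq
  · exact hlt
  exfalso
  -- the integral is zero, so g ∘ X = 0 a.e.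
  have hae : (fun ω => g (X ω) ^ 2) =ᵐ[P] 0 :=
    (integral_eq_zero_iff_of_nonneg (fun ω => sq_nonneg _) hintg2).mp heq.symm
  have haeg : ∀ᵐ ω ∂P, g (X ω) = 0 := by
    filter_upwards [hae] with ω h
    have h' : g (X ω) ^ 2 = 0 := h
    exact (pow_eq_zero_iff two_ne_zero).mp h'
  have hmap : ∀ᵐ x ∂(P.map X), g x = 0 :=
    (ae_map_iff hX.aemeasurable (hmeasg (measurableSet_singleton 0))).mpr haeg
  rw [map_eq_withDensity_pdf X P volume] at hmap
  have hvol : ∀ᵐ x ∂(volume : Measure ℝ), pdf X P volume x ≠ 0 → g x = 0 :=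
    (ae_withDensity_iff (measurable_pdf X P volume)).mp hmap
  obtain ⟨ε, hε, hpdfpos⟩ := hpos
  -- sets where g does not vanish inside (-ε, ε) are null
  have hnull : ∀ s : Set ℝ, s ⊆ Set.Ioo (-ε) ε → (∀ x ∈ s, g x ≠ 0) → volume s = 0 := by
    intro s hs hgs
    rw [Filter.eventually_iff, mem_ae_iff] at hvol
    refine measure_mono_null ?_ hvol
    intro x hx
    intro himp
    exact (hgs x hx) (himp (hpdfpos x (hs hx)).ne')
  -- infinite zero sets on each side
  have hside : ∀ I : Set ℝ, MeasurableSet I → I ⊆ Set.Ioo (-ε) ε → volume I ≠ 0 →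
      {x ∈ I | g x = 0}.Infinite := by
    intro I hImeas hIsub hIpos
    have hBnull : volume {x ∈ I | g x ≠ 0} = 0 :=
      hnull _ (fun x hx => hIsub hx.1) fun x hx => hx.2
    intro hfin
    apply hIpos
    refine le_antisymm ?_ zero_le
    have : I ⊆ {x ∈ I | g x = 0} ∪ {x ∈ I | g x ≠ 0} := by
      intro x hx
      by_cases h : g x = 0
      · exact Or.inl ⟨hx, h⟩
      · exact Or.inr ⟨hx, h⟩
    calc volume I ≤ volume ({x ∈ I | g x = 0} ∪ {x ∈ I | g x ≠ 0}) := measure_mono this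
      _ ≤ volume {x ∈ I | g x = 0} + volume {x ∈ I | g x ≠ 0} := measure_union_le _ _
      _ = 0 := by rw [hBnull, hfin.measure_zero volume]; simp
  -- positive side
  have hIoo1 : volume (Set.Ioo (0:ℝ) ε) ≠ 0 := by
    simp [Real.volume_Ioo]
    linarith
  have hIoo2 : volume (Set.Ioo (-ε) (0:ℝ)) ≠ 0 := by
    simp [Real.volume_Ioo]
    linarith
  have hpos_side : {x ∈ Set.Ioo (0:ℝ) ε | g x = 0}.Infinite :=
    hside _ measurableSet_Ioo (fun x hx => ⟨lt_trans (by linarith) hx.1, hx.2⟩) hIoo1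
  have hneg_side : {x ∈ Set.Ioo (-ε) (0:ℝ) | g x = 0}.Infinite :=
    hside _ measurableSet_Ioo (fun x hx => ⟨hx.1, lt_trans hx.2 hε⟩) hIoo2
  have hquadpos : ∀ x ∈ {x ∈ Set.Ioo (0:ℝ) ε | g x = 0},
      u 0 + u 2 * x + u 4 * x ^ 2 = 0 := by
    intro x hx
    have hx0 : 0 < x := hx.1.1
    have := hx.2
    rw [hg] at this
    simp only [Fin.sum_univ_five, designVec, Matrix.cons_val_zero, Matrix.cons_val_one,
      Matrix.head_cons, Matrix.cons_val_two, Matrix.tail_cons, Matrix.cons_val_three,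
      Matrix.cons_val_four, if_pos hx0] at this
    linarith [this]
  have hquadneg : ∀ x ∈ {x ∈ Set.Ioo (-ε) (0:ℝ) | g x = 0},
      u 1 + u 3 * x + u 4 * x ^ 2 = 0 := by
    intro x hx
    have hx0 : ¬ (0 < x) := not_lt.mpr hx.1.2.le
    have := hx.2
    rw [hg] at this
    simp only [Fin.sum_univ_five, designVec, Matrix.cons_val_zero, Matrix.cons_val_one,
      Matrix.head_cons, Matrix.cons_val_two, Matrix.tail_cons, Matrix.cons_val_three,
      Matrix.cons_val_four, if_neg hx0] at this
    linarith [this]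
  obtain ⟨hu0, hu2, hu4⟩ := quad_coeffs_zero _ _ _ _ hpos_side hquadpos
  obtain ⟨hu1, hu3, -⟩ := quad_coeffs_zero _ _ _ _ hneg_side hquadneg
  apply hu
  funext i
  fin_cases i <;> simpa using (by assumption : _ = (0:ℝ))
end

section
/- Let (aₙ) and (Vₙ) be sequences of positive reals and suppose there exist 0 < a₋ ≤ a₊ < ∞ such that B²tₙ² + Vₙ ≤ a₊ n^{−6/7} and B²tₙ² + Vₙ ≥ a₋ n^{−6/7} for all large n, where tₙ, Vₙ > 0 and B > 0 and additionally for every k ∈ ℕ and m = n/k, the rescaled quantity B²tₙ² + kVₙ upper-bounds an analogous optimal objective at sample size m satisfying the same lower bound a₋ m^{−6/7}. Then there exists c > 0 with Vₙ ≥ c n^{−6/7} for all large n; in particular tₙ/√Vₙ is bounded. -/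
/-!
Testing the minimax objective at sample size `n / k` against the estimator optimal at size `n`
gives `a₋ k^p n^{-p} ≤ B²tₙ² + k Vₙ`, while `B²tₙ² + Vₙ ≤ a₊ n^{-p}`. Subtracting,
`(a₋ k^p - a₊) n^{-p} ≤ (k - 1) Vₙ`, and a large fixed `k` makes the left side a positive
multiple of `n^{-p}`. The squared bias is then at most `a₊ n^{-p} ≲ Vₙ`.
-/

open Filter

lemma exists_nat_two_le_and_lt_mul_rpow {a p : ℝ} (ha : 0 < a) (hp : 0 < p) (b : ℝ) :
    ∃ k : ℕ, 2 ≤ k ∧ b < a * (k : ℝ) ^ p :=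
  ((eventually_ge_atTop 2).and <|
    (((tendsto_rpow_atTop hp).comp tendsto_natCast_atTop_atTop).const_mul_atTop ha).eventually_gt_atTop
      b).exists

lemma Real.div_rpow_neg {x y : ℝ} (hx : 0 ≤ x) (hy : 0 ≤ y) (p : ℝ) :
    (x / y) ^ (-p) = y ^ p * x ^ (-p) := by
  rw [Real.div_rpow hx hy, Real.rpow_neg hy, div_inv_eq_mul, mul_comm]

theorem eventually_rpow_le_of_rescaled_objective {p : ℝ} (hp : 0 < p) {b V : ℕ → ℝ}
    {aminus aplus : ℝ} (h0 : 0 < aminus)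
    (hupper : ∀ᶠ n : ℕ in atTop, b n + V n ≤ aplus * (n : ℝ) ^ (-p))
    (hrescale : ∀ k : ℕ, 0 < k → ∀ᶠ n : ℕ in atTop,
      aminus * ((n : ℝ) / (k : ℝ)) ^ (-p) ≤ b n + (k : ℝ) * V n) :
    ∃ c > 0, ∀ᶠ n : ℕ in atTop, c * (n : ℝ) ^ (-p) ≤ V n := by
  obtain ⟨k, hk2, hk⟩ := exists_nat_two_le_and_lt_mul_rpow h0 hp aplus
  have hk1 : (0 : ℝ) < k - 1 := by
    have : (2 : ℝ) ≤ k := by exact_mod_cast hk2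
    linarith
  refine ⟨(aminus * (k : ℝ) ^ p - aplus) / (k - 1), div_pos (by linarith) hk1, ?_⟩
  filter_upwards [hupper, hrescale k (by omega)] with n hu hr
  rw [Real.div_rpow_neg n.cast_nonneg k.cast_nonneg] at hr
  rw [div_mul_eq_mul_div, div_le_iff₀ hk1]
  linarith

lemma div_sqrt_le_of_sq_mul_le {B t V A : ℝ} (hB : B ≠ 0) (hA : 0 ≤ A)
    (h : B ^ 2 * t ^ 2 ≤ A * V) : t / √V ≤ √A / |B| := by
  have ht : t ^ 2 ≤ (√A / |B|) ^ 2 * V := by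
    rw [div_pow, Real.sq_sqrt hA, sq_abs, div_mul_eq_mul_div, le_div_iff₀ (by positivity)]
    linarith
  refine div_le_of_le_mul₀ (Real.sqrt_nonneg V) (by positivity) ?_
  calc t ≤ |t| := le_abs_self t
    _ ≤ √((√A / |B|) ^ 2 * V) := Real.abs_le_sqrt ht
    _ = √A / |B| * √V := by
      rw [Real.sqrt_mul (sq_nonneg _), Real.sqrt_sq (by positivity)]

lemma div_sqrt_le_of_sq_mul_add_le {B t V A c x : ℝ} (hB : B ≠ 0) (hA : 0 ≤ A) (hc : 0 < c)
    (hx : 0 ≤ x) (hupper : B ^ 2 * t ^ 2 + V ≤ A * x) (hV : c * x ≤ V) :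
    t / √V ≤ √(A / c) / |B| := by
  refine div_sqrt_le_of_sq_mul_le hB (div_nonneg hA hc.le) ?_
  calc B ^ 2 * t ^ 2 ≤ A * x := by nlinarith
    _ = A / c * (c * x) := by field_simp
    _ ≤ A / c * V := mul_le_mul_of_nonneg_left hV (div_nonneg hA hc.le)

theorem variance_scaling_lower_bound_general (B : ℝ) (hB : 0 < B)
    (t V : ℕ → ℝ)
    (aminus aplus : ℝ) (h0 : 0 < aminus) (hle : aminus ≤ aplus)
    (hupper : ∀ᶠ n : ℕ in atTop,
      B ^ 2 * t n ^ 2 + V n ≤ aplus * (n : ℝ) ^ (-(6 / 7 : ℝ)))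
    (hrescale : ∀ k : ℕ, 0 < k → ∀ᶠ n : ℕ in atTop,
      aminus * ((n : ℝ) / (k : ℝ)) ^ (-(6 / 7 : ℝ)) ≤ B ^ 2 * t n ^ 2 + (k : ℝ) * V n) :
    (∃ c > 0, ∀ᶠ n : ℕ in atTop, c * (n : ℝ) ^ (-(6 / 7 : ℝ)) ≤ V n) ∧
    ∃ C : ℝ, ∀ᶠ n : ℕ in atTop, t n / Real.sqrt (V n) ≤ C := by
  obtain ⟨c, hc, hVc⟩ :=
    eventually_rpow_le_of_rescaled_objective (by norm_num) h0 hupper hrescale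
  refine ⟨⟨c, hc, hVc⟩, √(aplus / c) / |B|, ?_⟩
  filter_upwards [hupper, hVc] with n hu hv
  exact div_sqrt_le_of_sq_mul_add_le hB.ne' (h0.le.trans hle) hc
    (Real.rpow_nonneg n.cast_nonneg _) hu hv

/-- Abstract scaling argument: if the minimax objective `B²tₙ² + Vₙ` is sandwiched between
`a₋ n^{−6/7}` and `a₊ n^{−6/7}`, and for every `k` the rescaled objective `B²tₙ² + k Vₙ`
dominates the minimax lower bound `a₋ (n/k)^{−6/7}` at sample size `m = n/k`, then
`Vₙ ≳ n^{−6/7}`; in particular `tₙ/√Vₙ` is bounded. -/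
theorem variance_scaling_lower_bound (B : ℝ) (hB : 0 < B)
    (t V : ℕ → ℝ) (ht : ∀ n, 0 < t n) (hV : ∀ n, 0 < V n)
    (aminus aplus : ℝ) (h0 : 0 < aminus) (hle : aminus ≤ aplus)
    (hupper : ∀ᶠ n : ℕ in atTop,
      B ^ 2 * t n ^ 2 + V n ≤ aplus * (n : ℝ) ^ (-(6 / 7 : ℝ)))
    (hlower : ∀ᶠ n : ℕ in atTop,
      aminus * (n : ℝ) ^ (-(6 / 7 : ℝ)) ≤ B ^ 2 * t n ^ 2 + V n)
    (hrescale : ∀ k : ℕ, 0 < k → ∀ᶠ n : ℕ in atTop,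
      aminus * ((n : ℝ) / (k : ℝ)) ^ (-(6 / 7 : ℝ)) ≤ B ^ 2 * t n ^ 2 + (k : ℝ) * V n) :
    (∃ c > 0, ∀ᶠ n : ℕ in atTop, c * (n : ℝ) ^ (-(6 / 7 : ℝ)) ≤ V n) ∧
    ∃ C : ℝ, ∀ᶠ n : ℕ in atTop, t n / Real.sqrt (V n) ≤ C :=
  variance_scaling_lower_bound_general B hB t V aminus aplus h0 hle hupper hrescale
end
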